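/- Let U be a fixed isometry with U†U = I, and let V be a random isometry (finitely supported) with V†V = I almost surely. Then for every unit vector |ψ⟩: (1/2)·‖U|ψ⟩⟨ψ|U† − E[V|ψ⟩⟨ψ|V†]‖₁ ≤ 2‖(U − E[V])|ψ⟩‖₂. -/

import Mathlib

open Matrix
open scoped ComplexOrder

/-- Trace norm of a complex matrix: `tr √(AᴴA)`. -/
noncomputable def traceNorm {m n : Type*} [Fintype m] [Fintype n] [DecidableEq n]
    (A : Matrix m n ℂ) : ℝ :=
  ((Matrix.posSemidef_conjTranspose_mul_self A).1.eigenvectorUnitary.1 *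
    diagonal (((↑) : ℝ → ℂ) ∘ (√·) ∘ (Matrix.posSemidef_conjTranspose_mul_self A).1.eigenvalues) *
    (star (Matrix.posSemidef_conjTranspose_mul_self A).1.eigenvectorUnitary : Matrix n n ℂ)).trace.re

/-- The rank-one outer product `|v⟩⟨v|`. -/
noncomputable def outer {m : Type*} (v : m → ℂ) : Matrix m m ℂ :=
  Matrix.vecMulVec v (star v)

/-!
Put `u = Uψ`, `vᵢ = Vᵢψ` and `m = ∑ pᵢ vᵢ`. The bias–variance identity
`∑ pᵢ |vᵢ⟩⟨vᵢ| = |m⟩⟨m| + S` with `S = ∑ pᵢ |vᵢ - m⟩⟨vᵢ - m| ⪰ 0` gives `tr S = 1 - ‖m‖²`.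
The rank-two part polarizes: with `a = t(u + m)` and `b = t⁻¹(u - m)`,
`|u⟩⟨u| - |m⟩⟨m| = ¼(|a + b⟩⟨a + b| - |a - b⟩⟨a - b|)`, so the whole difference is `P - N` with
`P, N ⪰ 0`, and `‖P - N‖₁ ≤ tr P + tr N = ‖u + m‖‖u - m‖ + 1 - ‖m‖²` for the optimal `t`.
Both terms are at most `2‖u - m‖`, since `‖m‖ ≤ 1 ≤ ‖m‖ + ‖u - m‖`.
-/

namespace Matrix

variable {n : Type*} [Fintype n]

lemma PosSemidef.re_dotProduct_mulVec_nonneg {P : Matrix n n ℂ} (hP : P.PosSemidef)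
    (x : n → ℂ) : 0 ≤ (star x ⬝ᵥ (P *ᵥ x)).re :=
  (Complex.nonneg_iff.mp (hP.dotProduct_mulVec_nonneg x)).1

variable [DecidableEq n]

lemma IsHermitian.traceNorm_eq_sum_abs_eigenvalues {A : Matrix n n ℂ} (hA : A.IsHermitian) :
    traceNorm A = ∑ i, |hA.eigenvalues i| := by
  have hAA := (posSemidef_conjTranspose_mul_self A).1
  have h_sqrt : hAA.cfc Real.sqrt = hA.cfc (|·|) := by
    rw [← hAA.cfc_eq, ← hA.cfc_eq, hA.eq, ← pow_two, ← cfc_pow_id (R := ℝ) A 2,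
      ← cfc_comp' Real.sqrt (· ^ 2) A]
    exact cfc_congr fun x _ => Real.sqrt_sq_eq_abs x
  change (hAA.cfc Real.sqrt).trace.re = _
  rw [h_sqrt, IsHermitian.cfc, Unitary.conjStarAlgAut_apply, trace_mul_cycle,
    Unitary.coe_star_mul_self, Matrix.one_mul, trace_diagonal, Complex.re_sum]
  rfl

lemma trace_eq_sum_star_dotProduct_mulVec (A : Matrix n n ℂ)
    (b : OrthonormalBasis n ℂ (EuclideanSpace ℂ n)) :
    A.trace = ∑ i, star ⇑(b i) ⬝ᵥ (A *ᵥ ⇑(b i)) := by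
  have h := LinearMap.trace_eq_sum_inner (toEuclideanLin A) b
  rw [LinearMap.trace_eq_matrix_trace ℂ (EuclideanSpace.basisFun n ℂ).toBasis,
    toEuclideanLin_eq_toLin_orthonormal, LinearMap.toMatrix_toLin] at h
  simp only [EuclideanSpace.inner_eq_star_dotProduct] at h
  rw [h]
  exact Finset.sum_congr rfl fun i _ => dotProduct_comm _ _

end Matrix

section TraceNorm

variable {n : Type*} [Fintype n] [DecidableEq n]

lemma traceNorm_sub_le_re_trace_add_re_trace {P N : Matrix n n ℂ} (hP : P.PosSemidef)
    (hN : N.PosSemidef) : traceNorm (P - N) ≤ P.trace.re + N.trace.re := by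
  have hH := hP.1.sub hN.1
  set w := hH.eigenvectorBasis
  have heig : ∀ i, hH.eigenvalues i =
      (star ⇑(w i) ⬝ᵥ (P *ᵥ ⇑(w i))).re - (star ⇑(w i) ⬝ᵥ (N *ᵥ ⇑(w i))).re := fun i => by
    rw [hH.eigenvalues_eq, sub_mulVec, dotProduct_sub, map_sub]
    rfl
  rw [hH.traceNorm_eq_sum_abs_eigenvalues, P.trace_eq_sum_star_dotProduct_mulVec w,
    N.trace_eq_sum_star_dotProduct_mulVec w, Complex.re_sum, Complex.re_sum,
    ← Finset.sum_add_distrib]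
  gcongr with i
  rw [heig, abs_le]
  constructor <;>
    linarith [hP.re_dotProduct_mulVec_nonneg (w i), hN.re_dotProduct_mulVec_nonneg (w i)]

end TraceNorm

section Outer

variable {n : Type*}

lemma outer_neg (v : n → ℂ) : outer (-v) = outer v := by
  simp [outer]

lemma sum_smul_outer_eq_outer_sum_add {ι : Type*} [Fintype ι] (p : ι → ℝ)
    (hps : ∑ i, p i = 1) (v : ι → EuclideanSpace ℂ n) :
    ∑ i, (p i : ℂ) • outer ⇑(v i) = outer ⇑(∑ i, (p i : ℂ) • v i) +
      ∑ i, (p i : ℂ) • outer ⇑(v i - ∑ j, (p j : ℂ) • v j) := by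
  set m := ∑ i, (p i : ℂ) • v i with hm
  have hma : ∀ a, m a = ∑ i, (p i : ℂ) * v i a := fun a => by simp [hm]
  have hp : ∑ i, (p i : ℂ) = 1 := by exact_mod_cast hps
  ext a b
  simp only [Matrix.sum_apply, Matrix.add_apply, Matrix.smul_apply, outer, vecMulVec_apply,
    Pi.star_apply, WithLp.ofLp_sub, Pi.sub_apply, smul_eq_mul, star_sub]
  have hmb : star (m b) = ∑ i, (p i : ℂ) * star (v i b) := by simp [hma, Complex.conj_ofReal]
  have hexpand : ∀ c, (p c : ℂ) * ((v c a - m a) * (star (v c b) - star (m b))) =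
      (p c : ℂ) * (v c a * star (v c b)) - (p c : ℂ) * v c a * star (m b) -
        m a * ((p c : ℂ) * star (v c b)) + (p c : ℂ) * (m a * star (m b)) := fun c => by ring
  simp only [hexpand, Finset.sum_add_distrib, Finset.sum_sub_distrib]
  rw [← Finset.sum_mul, ← Finset.mul_sum, ← Finset.sum_mul, ← hma, ← hmb, hp]
  ring

variable [Fintype n]

lemma outer_posSemidef (v : n → ℂ) : (outer v).PosSemidef :=
  posSemidef_vecMulVec_self_star v

lemma re_trace_outer (x : EuclideanSpace ℂ n) : (outer x).trace.re = ‖x‖ ^ 2 := by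
  rw [outer, trace_vecMulVec, ← EuclideanSpace.inner_eq_star_dotProduct,
    inner_self_eq_norm_sq_to_K]
  norm_cast

lemma outer_sub_outer_eq (x y : EuclideanSpace ℂ n) {t : ℝ} (ht : t ≠ 0) :
    outer x - outer y = (1 / 4 : ℂ) • (outer ⇑((t : ℂ) • (x + y) + (t⁻¹ : ℂ) • (x - y)) -
      outer ⇑((t : ℂ) • (x + y) - (t⁻¹ : ℂ) • (x - y))) := by
  ext i j
  simp [outer, vecMulVec_apply]
  field_simp
  ring

lemma traceNorm_outer_sub_outer_sub_le [DecidableEq n] (x y : EuclideanSpace ℂ n)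
    {S : Matrix n n ℂ} (hS : S.PosSemidef) :
    traceNorm (outer x - outer y - S) ≤ ‖x + y‖ * ‖x - y‖ + S.trace.re := by
  by_cases hdeg : x + y = 0 ∨ x - y = 0
  · have hxy : outer x = outer y := by
      rcases hdeg with h | h
      · rw [eq_neg_of_add_eq_zero_left h, WithLp.ofLp_neg, outer_neg]
      · rw [sub_eq_zero.mp h]
    have hzero : ‖x + y‖ * ‖x - y‖ = 0 := by rcases hdeg with h | h <;> simp [h]
    simpa [hxy, hzero] using traceNorm_sub_le_re_trace_add_re_trace PosSemidef.zero hS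
  push Not at hdeg
  have hs : 0 < ‖x + y‖ := norm_pos_iff.mpr hdeg.1
  have hd : 0 < ‖x - y‖ := norm_pos_iff.mpr hdeg.2
  -- `t` minimizes `(t²‖x + y‖² + t⁻²‖x - y‖²) / 2`, the trace bound for the rank-two part
  set t := Real.sqrt (‖x - y‖ / ‖x + y‖)
  have ht : 0 < t := Real.sqrt_pos.mpr (div_pos hd hs)
  have ht2 : t ^ 2 = ‖x - y‖ / ‖x + y‖ := Real.sq_sqrt (div_pos hd hs).le
  set a := (t : ℂ) • (x + y)
  set b := (t⁻¹ : ℂ) • (x - y)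
  have hquarter : (0 : ℂ) ≤ 1 / 4 := by rw [Complex.nonneg_iff]; norm_num
  have hP := (outer_posSemidef ⇑(a + b)).smul hquarter
  have hN := ((outer_posSemidef ⇑(a - b)).smul hquarter).add hS
  have hdecomp : outer x - outer y - S =
      (1 / 4 : ℂ) • outer ⇑(a + b) - ((1 / 4 : ℂ) • outer ⇑(a - b) + S) := by
    rw [outer_sub_outer_eq x y ht.ne', smul_sub, sub_sub]
  have ha : ‖a‖ = t * ‖x + y‖ := by
    rw [norm_smul, Complex.norm_real, Real.norm_of_nonneg ht.le]
  have hb : ‖b‖ = t⁻¹ * ‖x - y‖ := by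
    rw [norm_smul, norm_inv, Complex.norm_real, Real.norm_of_nonneg ht.le]
  calc traceNorm (outer x - outer y - S)
      ≤ ((1 / 4 : ℂ) • outer ⇑(a + b)).trace.re +
          ((1 / 4 : ℂ) • outer ⇑(a - b) + S).trace.re :=
        hdecomp ▸ traceNorm_sub_le_re_trace_add_re_trace hP hN
    _ = (‖a + b‖ ^ 2 + ‖a - b‖ ^ 2) / 4 + S.trace.re := by
        simp only [trace_add, trace_smul, smul_eq_mul, Complex.add_re, Complex.mul_re,
          re_trace_outer]
        norm_num
        ring
    _ = ‖x + y‖ * ‖x - y‖ + S.trace.re := by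
        rw [parallelogram_law_with_norm ℂ a b, ha, hb, mul_pow, mul_pow, inv_pow, ht2]
        field_simp
        ring

lemma traceNorm_outer_sub_sum_smul_outer_le [DecidableEq n] {ι : Type*} [Fintype ι]
    (p : ι → ℝ) (hp : ∀ i, 0 ≤ p i) (hps : ∑ i, p i = 1)
    (u : EuclideanSpace ℂ n) (v : ι → EuclideanSpace ℂ n) (hu : ‖u‖ = 1) (hv : ∀ i, ‖v i‖ = 1) :
    traceNorm (outer u - ∑ i, (p i : ℂ) • outer ⇑(v i)) ≤ 4 * ‖u - ∑ i, (p i : ℂ) • v i‖ := by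
  set m := ∑ i, (p i : ℂ) • v i
  set S := ∑ i, (p i : ℂ) • outer ⇑(v i - m)
  have hS : S.PosSemidef :=
    posSemidef_sum _ fun i _ => (outer_posSemidef _).smul (Complex.zero_le_real.mpr (hp i))
  have hbias : ∑ i, (p i : ℂ) • outer ⇑(v i) = outer m + S :=
    sum_smul_outer_eq_outer_sum_add p hps v
  have htrS : S.trace.re = 1 - ‖m‖ ^ 2 := by
    have h := congrArg (fun M => M.trace.re) hbias
    simp only [trace_add, Complex.add_re, trace_sum, trace_smul, smul_eq_mul, Complex.re_sum,
      Complex.re_ofReal_mul, re_trace_outer, hv, one_pow, mul_one, hps] at h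
    linarith
  have hm : ‖m‖ ≤ 1 := by
    refine (norm_sum_le _ _).trans_eq ?_
    simp [norm_smul, hv, abs_of_nonneg (hp _), hps]
  have hsum : ‖u + m‖ ≤ 2 := by linarith [norm_add_le u m]
  have hdiff : 1 - ‖m‖ ≤ ‖u - m‖ := by simpa [hu] using norm_sub_norm_le u m
  calc traceNorm (outer u - ∑ i, (p i : ℂ) • outer ⇑(v i))
      = traceNorm (outer u - outer m - S) := by rw [hbias, sub_add_eq_sub_sub]
    _ ≤ ‖u + m‖ * ‖u - m‖ + S.trace.re := traceNorm_outer_sub_outer_sub_le u m hS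
    _ ≤ 4 * ‖u - m‖ := by
        rw [htrS]
        nlinarith [norm_nonneg m, norm_nonneg (u - m)]

end Outer

lemma Matrix.norm_toEuclideanLin_apply_of_conjTranspose_mul_self_eq_one {m n : Type*}
    [Fintype m] [Fintype n] [DecidableEq n] {A : Matrix m n ℂ} (hA : Aᴴ * A = 1)
    (x : EuclideanSpace ℂ n) : ‖toEuclideanLin A x‖ = ‖x‖ := by
  have h : inner ℂ (toEuclideanLin A x) (toEuclideanLin A x) = inner ℂ x x := by
    simp only [EuclideanSpace.inner_eq_star_dotProduct, toLpLin_apply]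
    rw [star_mulVec, dotProduct_comm, dotProduct_mulVec, vecMul_vecMul, hA, vecMul_one,
      dotProduct_comm]
  rw [← sq_eq_sq₀ (norm_nonneg _) (norm_nonneg _), ← inner_self_eq_norm_sq (𝕜 := ℂ),
    ← inner_self_eq_norm_sq (𝕜 := ℂ), h]

theorem stmt1 {dIn dOut K : ℕ} (U : Matrix (Fin dOut) (Fin dIn) ℂ)
    (hU : Uᴴ * U = 1)
    (p : Fin K → ℝ) (hp : ∀ i, 0 ≤ p i) (hps : ∑ i, p i = 1)
    (V : Fin K → Matrix (Fin dOut) (Fin dIn) ℂ) (hV : ∀ i, (V i)ᴴ * V i = 1)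
    (ψ : EuclideanSpace ℂ (Fin dIn)) (hψ : ‖ψ‖ = 1) :
    (1 / 2) * traceNorm (outer (U.mulVec ψ) - ∑ i, (p i : ℂ) • outer ((V i).mulVec ψ))
      ≤ 2 * ‖Matrix.toEuclideanLin (U - ∑ i, (p i : ℂ) • V i) ψ‖ := by
  have hunit : ∀ A : Matrix (Fin dOut) (Fin dIn) ℂ, Aᴴ * A = 1 → ‖toEuclideanLin A ψ‖ = 1 :=
    fun A hA => (Matrix.norm_toEuclideanLin_apply_of_conjTranspose_mul_self_eq_one hA ψ).trans hψ
  have key : traceNorm (outer (U *ᵥ ψ) - ∑ i, (p i : ℂ) • outer (V i *ᵥ ψ)) ≤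
      4 * ‖toEuclideanLin U ψ - ∑ i, (p i : ℂ) • toEuclideanLin (V i) ψ‖ :=
    traceNorm_outer_sub_sum_smul_outer_le p hp hps (toEuclideanLin U ψ)
      (fun i => toEuclideanLin (V i) ψ) (hunit U hU) fun i => hunit (V i) (hV i)
  have hlin : toEuclideanLin (U - ∑ i, (p i : ℂ) • V i) ψ =
      toEuclideanLin U ψ - ∑ i, (p i : ℂ) • toEuclideanLin (V i) ψ := by
    simp only [map_sub, map_sum, map_smul, LinearMap.sub_apply, LinearMap.sum_apply,
      LinearMap.smul_apply]
  rw [hlin]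
  linarith
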